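/- arXiv:2503.05528 — 2 statements merged into one kernel-verified Lean document; each statement's English description precedes it below -/
import Mathlib

section
/- Let n1, n2, m ∈ ℕ, k1, k2 ∈ ℝ and 0 < ε ≤ 1. If Ext : {0,1}^{n1} × {0,1}^{n2} → {0,1}^m is a (k1, k2, ε) X1-strong two-source extractor, then Ext is a (k1, k2 + log₂(1/ε), 2ε) X1-strong two-source extractor against classical product-type knowledge. -/
open Matrix Kronecker BigOperators Finset ComplexOrder

/-- Bit strings of length `n`. -/
abbrev BS (n : ℕ) := Fin n → Bool

/-- Embedding of a bit into the field with two elements. -/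
def toZ2 (b : Bool) : ZMod 2 := if b then 1 else 0

/-- Inner product modulo 2 of two bit strings. -/
def ipBool {n : ℕ} (x y : BS n) : Bool := decide ((∑ i, toZ2 (x i) * toZ2 (y i)) = 1)

/-- Multiplication of a bit string by a matrix over F₂. -/
def mulVecBool {n : ℕ} (L : Matrix (Fin n) (Fin n) (ZMod 2)) (x : BS n) : BS n :=
  fun i => decide ((L.mulVec fun j => toZ2 (x j)) i = 1)

/-- The `deor` extractor associated to a family of matrices over F₂. -/
def deor {n m : ℕ} (A : Fin m → Matrix (Fin n) (Fin n) (ZMod 2)) (x y : BS n) : BS m :=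
  fun i => ipBool (mulVecBool (A i) x) y

/-- Trace norm of a complex matrix: `tr √(SᴴS)`. -/
noncomputable def traceNorm {B : Type*} [Fintype B] [DecidableEq B] (S : Matrix B B ℂ) : ℝ :=
  (((Matrix.posSemidef_conjTranspose_mul_self S).1.eigenvectorUnitary.1 *
    Matrix.diagonal ((fun r : ℝ => (r : ℂ)) ∘ Real.sqrt ∘ (Matrix.posSemidef_conjTranspose_mul_self S).1.eigenvalues) *
    (star (Matrix.posSemidef_conjTranspose_mul_self S).1.eigenvectorUnitary : Matrix B B ℂ)).trace).re

/-- Trace distance between two matrices. -/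
noncomputable def traceDist {B : Type*} [Fintype B] [DecidableEq B] (ρ σ : Matrix B B ℂ) : ℝ :=
  (1/2) * traceNorm (ρ - σ)

/-- A density matrix: positive semidefinite with unit trace. -/
def IsDensity {B : Type*} [Fintype B] (ρ : Matrix B B ℂ) : Prop :=
  ρ.PosSemidef ∧ ρ.trace = 1

/-- A cq-state given by its family of (subnormalized) conditional operators. -/
def IsCQ {X B : Type*} [Fintype X] [Fintype B] (ρ : X → Matrix B B ℂ) : Prop :=
  (∀ x, (ρ x).PosSemidef) ∧ (∑ x, (ρ x).trace) = 1

/-- The full matrix `Σ_x |x⟩⟨x| ⊗ ρ_{B∧x}` of a cq-state. -/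
noncomputable def cqMatrix {X B : Type*} [Fintype X] [DecidableEq X] [Fintype B]
    (ρ : X → Matrix B B ℂ) : Matrix (X × B) (X × B) ℂ :=
  ∑ x, (Matrix.single x x (1:ℂ)) ⊗ₖ ρ x

/-- Conditional min-entropy of a cq-state: the sup over density matrices σ and reals w with
`ρ_{B∧x} ≤ 2^{-w}·σ` for all `x` (Loewner order), of `w`; `⊥ = -∞` if no such pair exists. -/
noncomputable def qCondHmin {X B : Type*} [Fintype X] [Fintype B]
    (ρ : X → Matrix B B ℂ) : EReal :=
  sSup {z : EReal | ∃ w : ℝ, z = (w : EReal) ∧ ∃ σ : Matrix B B ℂ, σ.PosSemidef ∧ σ.trace = 1 ∧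
    ∀ x, (((2:ℝ) ^ (-w)) • σ - ρ x).PosSemidef}

/-- The maximally mixed state on `m` qubits. -/
noncomputable def mixed (m : ℕ) : Matrix (BS m) (BS m) ℂ := ((2:ℂ)^m)⁻¹ • 1

/-- A finitely supported probability distribution. -/
def IsDist {α : Type*} [Fintype α] (P : α → ℝ) : Prop := (∀ a, 0 ≤ P a) ∧ ∑ a, P a = 1

/-- Total variation distance. -/
noncomputable def TV {α : Type*} [Fintype α] (Q R : α → ℝ) : ℝ := (1/2) * ∑ a, |Q a - R a|

/-- Min-entropy of a distribution. -/
noncomputable def Hmin {X : Type*} [Fintype X] [Nonempty X] (P : X → ℝ) : ℝ :=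
  - Real.logb 2 (⨆ x, P x)

/-- Conditional min-entropy of a joint distribution. -/
noncomputable def HminCond {X Z : Type*} [Fintype X] [Nonempty X] [Fintype Z]
    (P : X → Z → ℝ) : ℝ :=
  - Real.logb 2 (∑ z, ⨆ x, P x z)

/-- `(k1,k2,ε)` X1-strong two-source extractor (no side information). -/
def IsStrongExt (n1 n2 m : ℕ) (Ext : BS n1 → BS n2 → BS m) (k1 k2 ε : ℝ) : Prop :=
  ∀ (P1 : BS n1 → ℝ) (P2 : BS n2 → ℝ), IsDist P1 → IsDist P2 →
    k1 ≤ Hmin P1 → k2 ≤ Hmin P2 →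
    TV (fun p : BS m × BS n1 => ∑ x2, if Ext p.2 x2 = p.1 then P1 p.2 * P2 x2 else 0)
       (fun p : BS m × BS n1 => ((2:ℝ)^m)⁻¹ * P1 p.2) ≤ ε

/-- `(k1,k2,ε)` X1-strong two-source extractor against classical product-type knowledge. -/
def IsStrongExtCPT (n1 n2 m : ℕ) (Ext : BS n1 → BS n2 → BS m) (k1 k2 ε : ℝ) : Prop :=
  ∀ (Z1 Z2 : Type) [Fintype Z1] [Fintype Z2],
    ∀ (P1 : BS n1 → Z1 → ℝ) (P2 : BS n2 → Z2 → ℝ),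
    IsDist (fun p : BS n1 × Z1 => P1 p.1 p.2) →
    IsDist (fun p : BS n2 × Z2 => P2 p.1 p.2) →
    k1 ≤ HminCond P1 → k2 ≤ HminCond P2 →
    TV (fun q : BS m × BS n1 × Z1 × Z2 =>
          ∑ x2, if Ext q.2.1 x2 = q.1 then P1 q.2.1 q.2.2.1 * P2 x2 q.2.2.2 else 0)
       (fun q : BS m × BS n1 × Z1 × Z2 =>
          ((2:ℝ)^m)⁻¹ * P1 q.2.1 q.2.2.1 * ∑ x2, P2 x2 q.2.2.2) ≤ ε

/-- `(k1,k2,ε)` weak two-source extractor against classical product-type knowledge. -/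
def IsWeakExtCPT (n1 n2 m : ℕ) (Ext : BS n1 → BS n2 → BS m) (k1 k2 ε : ℝ) : Prop :=
  ∀ (Z1 Z2 : Type) [Fintype Z1] [Fintype Z2],
    ∀ (P1 : BS n1 → Z1 → ℝ) (P2 : BS n2 → Z2 → ℝ),
    IsDist (fun p : BS n1 × Z1 => P1 p.1 p.2) →
    IsDist (fun p : BS n2 × Z2 => P2 p.1 p.2) →
    k1 ≤ HminCond P1 → k2 ≤ HminCond P2 →
    TV (fun q : BS m × Z1 × Z2 =>
          ∑ x1, ∑ x2, if Ext x1 x2 = q.1 then P1 x1 q.2.1 * P2 x2 q.2.2 else 0)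
       (fun q : BS m × Z1 × Z2 =>
          ((2:ℝ)^m)⁻¹ * (∑ x1, P1 x1 q.2.1) * ∑ x2, P2 x2 q.2.2) ≤ ε

/-- `(k1,k2,ε)` X1-strong two-source extractor against classical knowledge in the Markov model. -/
def IsStrongExtCMarkov (n1 n2 m : ℕ) (Ext : BS n1 → BS n2 → BS m) (k1 k2 ε : ℝ) : Prop :=
  ∀ (C : Type) [Fintype C], ∀ (P : BS n1 → BS n2 → C → ℝ),
    IsDist (fun q : BS n1 × BS n2 × C => P q.1 q.2.1 q.2.2) →
    (∀ x1 x2 c, P x1 x2 c * (∑ x1', ∑ x2', P x1' x2' c)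
        = (∑ x2', P x1 x2' c) * (∑ x1', P x1' x2 c)) →
    k1 ≤ HminCond (fun x1 c => ∑ x2, P x1 x2 c) →
    k2 ≤ HminCond (fun x2 c => ∑ x1, P x1 x2 c) →
    TV (fun q : BS m × BS n1 × C => ∑ x2, if Ext q.2.1 x2 = q.1 then P q.2.1 x2 q.2.2 else 0)
       (fun q : BS m × BS n1 × C => ((2:ℝ)^m)⁻¹ * ∑ x2, P q.2.1 x2 q.2.2) ≤ ε

/-- The output cq-state `ρ_{Ext(X1,X2) X1 C1 C2}` for product-type quantum side information. -/
noncomputable def qStrongOut {n1 n2 m : ℕ} {C1 C2 : Type}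
    [Fintype C1] [Fintype C2]
    (Ext : BS n1 → BS n2 → BS m)
    (ρ1 : BS n1 → Matrix C1 C1 ℂ) (ρ2 : BS n2 → Matrix C2 C2 ℂ) :
    Matrix (BS m × (BS n1 × C1) × C2) (BS m × (BS n1 × C1) × C2) ℂ :=
  ∑ x1, ∑ x2, (Matrix.single (Ext x1 x2) (Ext x1 x2) (1:ℂ)) ⊗ₖ
    (((Matrix.single x1 x1 (1:ℂ)) ⊗ₖ ρ1 x1) ⊗ₖ ρ2 x2)

/-- `(k1,k2,ε)` X1-strong two-source extractor against quantum product-type knowledge. -/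
def IsStrongExtQPT (n1 n2 m : ℕ) (Ext : BS n1 → BS n2 → BS m) (k1 k2 ε : ℝ) : Prop :=
  ∀ (C1 C2 : Type) [Fintype C1] [DecidableEq C1] [Fintype C2] [DecidableEq C2],
    ∀ (ρ1 : BS n1 → Matrix C1 C1 ℂ) (ρ2 : BS n2 → Matrix C2 C2 ℂ),
    IsCQ ρ1 → IsCQ ρ2 →
    (k1 : EReal) ≤ qCondHmin ρ1 → (k2 : EReal) ≤ qCondHmin ρ2 →
    traceDist (qStrongOut Ext ρ1 ρ2) (mixed m ⊗ₖ (cqMatrix ρ1 ⊗ₖ ∑ x2, ρ2 x2)) ≤ ε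

/-- `(k1,k2,ε)` weak two-source extractor against quantum product-type knowledge. -/
def IsWeakExtQPT (n1 n2 m : ℕ) (Ext : BS n1 → BS n2 → BS m) (k1 k2 ε : ℝ) : Prop :=
  ∀ (C1 C2 : Type) [Fintype C1] [DecidableEq C1] [Fintype C2] [DecidableEq C2],
    ∀ (ρ1 : BS n1 → Matrix C1 C1 ℂ) (ρ2 : BS n2 → Matrix C2 C2 ℂ),
    IsCQ ρ1 → IsCQ ρ2 →
    (k1 : EReal) ≤ qCondHmin ρ1 → (k2 : EReal) ≤ qCondHmin ρ2 →
    traceDist (∑ x1, ∑ x2, (Matrix.single (Ext x1 x2) (Ext x1 x2) (1:ℂ)) ⊗ₖ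
        ((ρ1 x1) ⊗ₖ ρ2 x2))
      (mixed m ⊗ₖ ((∑ x1, ρ1 x1) ⊗ₖ ∑ x2, ρ2 x2)) ≤ ε

/-- `(k1,k2,ε)` X1-strong two-source extractor against quantum knowledge in the Markov model,
in decomposed form. -/
def IsStrongExtQMarkov (n1 n2 m : ℕ) (Ext : BS n1 → BS n2 → BS m) (k1 k2 ε : ℝ) : Prop :=
  ∀ (Z C1 C2 : Type) [Fintype Z] [DecidableEq Z]
      [Fintype C1] [DecidableEq C1] [Fintype C2] [DecidableEq C2],
    ∀ (P : Z → ℝ) (ρ1 : Z → BS n1 → Matrix C1 C1 ℂ) (ρ2 : Z → BS n2 → Matrix C2 C2 ℂ),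
    IsDist P → (∀ z, IsCQ (ρ1 z)) → (∀ z, IsCQ (ρ2 z)) →
    (k1 : EReal) ≤ qCondHmin (fun x1 : BS n1 =>
      ∑ z, P z • (((ρ1 z x1) ⊗ₖ ∑ x2, ρ2 z x2) ⊗ₖ Matrix.single z z (1:ℂ))) →
    (k2 : EReal) ≤ qCondHmin (fun x2 : BS n2 =>
      ∑ z, P z • (((∑ x1, ρ1 z x1) ⊗ₖ ρ2 z x2) ⊗ₖ Matrix.single z z (1:ℂ))) →
    traceDist
      (∑ x1, ∑ x2, ∑ z, P z •
        ((Matrix.single (Ext x1 x2) (Ext x1 x2) (1:ℂ)) ⊗ₖ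
          ((Matrix.single x1 x1 (1:ℂ)) ⊗ₖ
            (((ρ1 z x1) ⊗ₖ ρ2 z x2) ⊗ₖ Matrix.single z z (1:ℂ)))))
      (mixed m ⊗ₖ cqMatrix (fun x1 : BS n1 =>
        ∑ z, P z • (((ρ1 z x1) ⊗ₖ ∑ x2, ρ2 z x2) ⊗ₖ Matrix.single z z (1:ℂ))))
      ≤ ε

/-!
Side information `Z1` costs nothing: the extractor is strong in `X1`, so the output deviation at
`(x1, z1)` is `P(x1, z1)` times a quantity that does not involve `z1`, and summing over `z1` leaves
the marginal of `X1`, whose min-entropy is at least `H_min(X1|Z1)`. For `Z2`, the deviation splits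
as a sum over `z2` of the no-side-information deviation for the conditional law of `X2` given `z2`,
weighted by `P(z2)`. Call `z2` bad when that conditional law has min-entropy below `k2`, i.e.
`max_x P(x, z2) > 2^{-k2} P(z2)`. Since `Σ_z max_x P(x, z) ≤ 2^{-k2} ε`, Markov's inequality bounds
the weight of the bad `z2` by `ε`. Each `z2` contributes at most its weight, and a good one at most
`ε` times its weight, so the total is at most `2ε`.
-/

lemma le_neg_logb_two_iff {s k : ℝ} (hs : 0 < s) : k ≤ -Real.logb 2 s ↔ s ≤ (2:ℝ) ^ (-k) := by
  rw [le_neg, Real.logb_le_iff_le_rpow one_lt_two hs]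

lemma IsDist.ciSup_pos {α : Type*} [Fintype α] [Nonempty α] {P : α → ℝ} (hP : IsDist P) :
    0 < ⨆ a, P a := by
  obtain ⟨a, -, ha⟩ := Finset.exists_lt_of_sum_lt (s := Finset.univ) (f := fun _ => (0:ℝ))
    (g := P) (by simp [hP.2])
  exact ha.trans_le (le_ciSup (Set.finite_range P).bddAbove a)

lemma IsDist.sum_right {X Z : Type*} [Fintype X] [Fintype Z] {P : X → Z → ℝ}
    (hP : IsDist fun p : X × Z => P p.1 p.2) : IsDist fun x => ∑ z, P x z :=
  ⟨fun x => Finset.sum_nonneg fun z _ => hP.1 (x, z), by rw [← hP.2, Fintype.sum_prod_type]⟩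

lemma IsDist.sum_left {X Z : Type*} [Fintype X] [Fintype Z] {P : X → Z → ℝ}
    (hP : IsDist fun p : X × Z => P p.1 p.2) : IsDist fun z => ∑ x, P x z :=
  ⟨fun z => Finset.sum_nonneg fun x _ => hP.1 (x, z),
    by rw [← hP.2, Fintype.sum_prod_type, Finset.sum_comm]⟩

lemma ciSup_sum_le_sum_ciSup {X Z : Type*} [Fintype X] [Nonempty X] [Fintype Z] (P : X → Z → ℝ) :
    ⨆ x, ∑ z, P x z ≤ ∑ z, ⨆ x, P x z :=
  ciSup_le fun x => Finset.sum_le_sum fun z _ => le_ciSup (Set.finite_range (P · z)).bddAbove x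

lemma le_Hmin_iff {X : Type*} [Fintype X] [Nonempty X] {P : X → ℝ} (hP : IsDist P) {k : ℝ} :
    k ≤ Hmin P ↔ ∀ x, P x ≤ (2:ℝ) ^ (-k) := by
  rw [Hmin, le_neg_logb_two_iff hP.ciSup_pos, ciSup_le_iff (Set.finite_range P).bddAbove]

lemma le_HminCond_iff {X Z : Type*} [Fintype X] [Nonempty X] [Fintype Z] {P : X → Z → ℝ}
    (hP : IsDist fun p : X × Z => P p.1 p.2) {k : ℝ} :
    k ≤ HminCond P ↔ ∑ z, ⨆ x, P x z ≤ (2:ℝ) ^ (-k) :=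
  le_neg_logb_two_iff (hP.sum_right.ciSup_pos.trans_le (ciSup_sum_le_sum_ciSup P))

lemma HminCond_le_Hmin_sum_right {X Z : Type*} [Fintype X] [Nonempty X] [Fintype Z]
    {P : X → Z → ℝ} (hP : IsDist fun p : X × Z => P p.1 p.2) :
    HminCond P ≤ Hmin fun x => ∑ z, P x z :=
  neg_le_neg (Real.logb_le_logb_of_le one_lt_two hP.sum_right.ciSup_pos
    (ciSup_sum_le_sum_ciSup P))

lemma sum_filter_lt_le_of_sum_le {ι : Type*} [Fintype ι] {W M : ι → ℝ} {c δ : ℝ}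
    (hc : 0 < c) (hM : ∀ i, 0 ≤ M i) (hsum : ∑ i, M i ≤ c * δ) :
    ∑ i ∈ univ.filter (fun i => c * W i < M i), W i ≤ δ := by
  refine le_of_mul_le_mul_left ?_ hc
  calc c * ∑ i ∈ univ.filter (fun i => c * W i < M i), W i
      ≤ ∑ i ∈ univ.filter (fun i => c * W i < M i), M i := by
        rw [Finset.mul_sum]
        exact Finset.sum_le_sum fun i hi => (Finset.mem_filter.mp hi).2.le
    _ ≤ ∑ i, M i := Finset.sum_le_univ_sum_of_nonneg hM
    _ ≤ c * δ := hsum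

section StrongExtDist

variable {n1 n2 m : ℕ} (Ext : BS n1 → BS n2 → BS m)

noncomputable def extDev (P2 : BS n2 → ℝ) (x1 : BS n1) (e : BS m) : ℝ :=
  (∑ x2, if Ext x1 x2 = e then P2 x2 else 0) - ((2:ℝ)^m)⁻¹ * ∑ x2, P2 x2

noncomputable def strongExtDist (P1 : BS n1 → ℝ) (P2 : BS n2 → ℝ) : ℝ :=
  TV (fun p : BS m × BS n1 => ∑ x2, if Ext p.2 x2 = p.1 then P1 p.2 * P2 x2 else 0)
     (fun p : BS m × BS n1 => ((2:ℝ)^m)⁻¹ * P1 p.2 * ∑ x2, P2 x2)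

lemma sum_ite_mul_sub_eq_mul_extDev (P2 : BS n2 → ℝ) (a : ℝ) (x1 : BS n1) (e : BS m) :
    (∑ x2, if Ext x1 x2 = e then a * P2 x2 else 0) - ((2:ℝ)^m)⁻¹ * a * ∑ x2, P2 x2
      = a * extDev Ext P2 x1 e := by
  rw [extDev, mul_sub, Finset.mul_sum _ _ a]
  simp only [mul_ite, mul_zero]
  ring

lemma extDev_smul (c : ℝ) (P2 : BS n2 → ℝ) (x1 : BS n1) (e : BS m) :
    extDev Ext (c • P2) x1 e = c * extDev Ext P2 x1 e := by
  rw [← sum_ite_mul_sub_eq_mul_extDev]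
  simp only [extDev, Pi.smul_apply, smul_eq_mul, ← Finset.mul_sum]
  ring

lemma sum_abs_extDev_le {P2 : BS n2 → ℝ} (hP2 : ∀ x, 0 ≤ P2 x) (x1 : BS n1) :
    ∑ e, |extDev Ext P2 x1 e| ≤ 2 * ∑ x2, P2 x2 := by
  have hhit : ∑ e : BS m, ∑ x2, (if Ext x1 x2 = e then P2 x2 else 0) = ∑ x2, P2 x2 := by
    rw [Finset.sum_comm]
    simp only [Finset.sum_ite_eq, Finset.mem_univ, if_true]
  have huniform : ∑ _e : BS m, ((2:ℝ)^m)⁻¹ * ∑ x2, P2 x2 = ∑ x2, P2 x2 := by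
    simp [Finset.card_univ, BS]
  calc ∑ e, |extDev Ext P2 x1 e|
      ≤ ∑ e : BS m, ((∑ x2, if Ext x1 x2 = e then P2 x2 else 0) + ((2:ℝ)^m)⁻¹ * ∑ x2, P2 x2) := by
        refine Finset.sum_le_sum fun e _ => (abs_sub _ _).trans_eq ?_
        rw [abs_of_nonneg (Finset.sum_nonneg fun x2 _ => by split_ifs <;> simp [hP2]),
          abs_of_nonneg (mul_nonneg (by positivity) (Finset.sum_nonneg fun x2 _ => hP2 x2))]
    _ = 2 * ∑ x2, P2 x2 := by rw [Finset.sum_add_distrib, hhit, huniform]; ring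

lemma strongExtDist_eq (P1 : BS n1 → ℝ) (P2 : BS n2 → ℝ) :
    strongExtDist Ext P1 P2 = 1 / 2 * ∑ e, ∑ x1, |P1 x1| * |extDev Ext P2 x1 e| := by
  simp only [strongExtDist, TV, Fintype.sum_prod_type, sum_ite_mul_sub_eq_mul_extDev, abs_mul]

lemma strongExtDist_smul (c : ℝ) (P1 : BS n1 → ℝ) (P2 : BS n2 → ℝ) :
    strongExtDist Ext P1 (c • P2) = |c| * strongExtDist Ext P1 P2 := by
  simp only [strongExtDist_eq, extDev_smul, abs_mul, Finset.mul_sum]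
  refine Finset.sum_congr rfl fun e _ => Finset.sum_congr rfl fun x1 _ => ?_
  ring

lemma strongExtDist_le_sum {P1 : BS n1 → ℝ} (hP1 : IsDist P1) {P2 : BS n2 → ℝ}
    (hP2 : ∀ x, 0 ≤ P2 x) : strongExtDist Ext P1 P2 ≤ ∑ x2, P2 x2 := by
  rw [strongExtDist_eq, Finset.sum_comm]
  calc 1 / 2 * ∑ x1, ∑ e, |P1 x1| * |extDev Ext P2 x1 e|
      ≤ 1 / 2 * ∑ x1, P1 x1 * (2 * ∑ x2, P2 x2) := by
        gcongr with x1
        rw [← Finset.mul_sum, abs_of_nonneg (hP1.1 x1)]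
        exact mul_le_mul_of_nonneg_left (sum_abs_extDev_le Ext hP2 x1) (hP1.1 x1)
    _ = ∑ x2, P2 x2 := by rw [← Finset.sum_mul, hP1.2]; ring

end StrongExtDist

lemma IsStrongExt.strongExtDist_le {n1 n2 m : ℕ} {Ext : BS n1 → BS n2 → BS m} {k1 k2 ε : ℝ}
    (h : IsStrongExt n1 n2 m Ext k1 k2 ε) {P1 : BS n1 → ℝ} {P2 : BS n2 → ℝ}
    (hP1 : IsDist P1) (hP2 : IsDist P2) (hk1 : k1 ≤ Hmin P1) (hk2 : k2 ≤ Hmin P2) :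
    strongExtDist Ext P1 P2 ≤ ε := by
  simpa [strongExtDist, hP2.2] using h P1 P2 hP1 hP2 hk1 hk2

lemma IsStrongExt.strongExtDist_le_mul_sum {n1 n2 m : ℕ} {Ext : BS n1 → BS n2 → BS m}
    {k1 k2 ε : ℝ} (h : IsStrongExt n1 n2 m Ext k1 k2 ε) {P1 : BS n1 → ℝ} {P2 : BS n2 → ℝ}
    (hP1 : IsDist P1) (hk1 : k1 ≤ Hmin P1) (hP2 : ∀ x, 0 ≤ P2 x)
    (hk2 : ∀ x, P2 x ≤ (2:ℝ) ^ (-k2) * ∑ x2, P2 x2) :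
    strongExtDist Ext P1 P2 ≤ ε * ∑ x2, P2 x2 := by
  set w := ∑ x2, P2 x2
  have hw0 : 0 ≤ w := Finset.sum_nonneg fun x2 _ => hP2 x2
  rcases hw0.eq_or_lt with hw | hw
  · calc strongExtDist Ext P1 P2 ≤ w := strongExtDist_le_sum Ext hP1 hP2
      _ = ε * w := by rw [← hw, mul_zero]
  have hQ : IsDist (w⁻¹ • P2) :=
    ⟨fun x => mul_nonneg (inv_nonneg.2 hw.le) (hP2 x), by
      simp only [Pi.smul_apply, smul_eq_mul, ← Finset.mul_sum]
      exact inv_mul_cancel₀ hw.ne'⟩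
  have hQk : k2 ≤ Hmin (w⁻¹ • P2) := (le_Hmin_iff hQ).2 fun x => by
    rw [Pi.smul_apply, smul_eq_mul, inv_mul_le_iff₀ hw, mul_comm]
    exact hk2 x
  calc strongExtDist Ext P1 P2 = strongExtDist Ext P1 (w • w⁻¹ • P2) := by
        rw [smul_smul, mul_inv_cancel₀ hw.ne', one_smul]
    _ = w * strongExtDist Ext P1 (w⁻¹ • P2) := by rw [strongExtDist_smul, abs_of_pos hw]
    _ ≤ w * ε := by gcongr; exact h.strongExtDist_le hP1 hQ hk1 hQk
    _ = ε * w := mul_comm _ _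

lemma TV_strongExtCPT_eq_sum_strongExtDist {n1 n2 m : ℕ} (Ext : BS n1 → BS n2 → BS m)
    {Z1 Z2 : Type} [Fintype Z1] [Fintype Z2] {P1 : BS n1 → Z1 → ℝ} (hP1 : ∀ x z, 0 ≤ P1 x z)
    (P2 : BS n2 → Z2 → ℝ) :
    TV (fun q : BS m × BS n1 × Z1 × Z2 =>
          ∑ x2, if Ext q.2.1 x2 = q.1 then P1 q.2.1 q.2.2.1 * P2 x2 q.2.2.2 else 0)
       (fun q : BS m × BS n1 × Z1 × Z2 =>
          ((2:ℝ)^m)⁻¹ * P1 q.2.1 q.2.2.1 * ∑ x2, P2 x2 q.2.2.2)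
      = ∑ z2, strongExtDist Ext (fun x1 => ∑ z1, P1 x1 z1) (fun x2 => P2 x2 z2) := by
  simp only [TV, strongExtDist_eq, Fintype.sum_prod_type, sum_ite_mul_sub_eq_mul_extDev, abs_mul]
  simp only [abs_of_nonneg (hP1 _ _), Finset.abs_sum_of_nonneg' (hP1 _), Finset.sum_mul,
    Finset.mul_sum]
  refine (Finset.sum_comm.trans ?_).symm
  refine Finset.sum_congr rfl fun e _ => Finset.sum_comm.trans ?_
  exact Finset.sum_congr rfl fun x1 _ => Finset.sum_comm

theorem stmt2_general {n1 n2 m : ℕ} (Ext : BS n1 → BS n2 → BS m) (k1 k2 ε : ℝ)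
    (hε : 0 < ε)
    (h : IsStrongExt n1 n2 m Ext k1 k2 ε) :
    IsStrongExtCPT n1 n2 m Ext k1 (k2 + Real.logb 2 (1/ε)) (2*ε) := by
  intro Z1 Z2 _ _ P1 P2 hP1 hP2 hk1 hk2
  rw [TV_strongExtCPT_eq_sum_strongExtDist Ext (fun x z => hP1.1 (x, z))]
  set W : Z2 → ℝ := fun z => ∑ x, P2 x z
  have hWnonneg : ∀ z, 0 ≤ W z := hP2.sum_left.1
  have hpow : (0:ℝ) < 2 ^ (-k2) := Real.rpow_pos_of_pos two_pos _
  have hsup : ∑ z, ⨆ x, P2 x z ≤ 2 ^ (-k2) * ε := by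
    have := (le_HminCond_iff hP2).1 hk2
    rwa [neg_add, Real.rpow_add two_pos, one_div, Real.logb_inv, neg_neg,
      Real.rpow_logb two_pos (by norm_num) hε] at this
  have hbad : ∑ z ∈ univ.filter (fun z => 2 ^ (-k2) * W z < ⨆ x, P2 x z), W z ≤ ε :=
    sum_filter_lt_le_of_sum_le hpow (fun z => Real.iSup_nonneg fun x => hP2.1 (x, z)) hsup
  have hz : ∀ z, strongExtDist Ext (fun x1 => ∑ z1, P1 x1 z1) (P2 · z)
      ≤ if 2 ^ (-k2) * W z < ⨆ x, P2 x z then W z else ε * W z := by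
    intro z
    split_ifs with hzbad
    · exact strongExtDist_le_sum Ext hP1.sum_right fun x => hP2.1 (x, z)
    · refine h.strongExtDist_le_mul_sum hP1.sum_right (hk1.trans (HminCond_le_Hmin_sum_right hP1))
        (fun x => hP2.1 (x, z)) fun x => ?_
      exact (le_ciSup (Set.finite_range (P2 · z)).bddAbove x).trans (not_lt.1 hzbad)
  calc ∑ z, strongExtDist Ext (fun x1 => ∑ z1, P1 x1 z1) (P2 · z)
      ≤ ∑ z, if 2 ^ (-k2) * W z < ⨆ x, P2 x z then W z else ε * W z :=
        Finset.sum_le_sum fun z _ => hz z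
    _ ≤ ε + ε * ∑ z, W z := by
        rw [Finset.sum_ite, ← Finset.mul_sum]
        exact add_le_add hbad
          (mul_le_mul_of_nonneg_left (Finset.sum_le_univ_sum_of_nonneg hWnonneg) hε.le)
    _ = 2 * ε := by rw [hP2.sum_left.2]; ring

theorem stmt2 {n1 n2 m : ℕ} (Ext : BS n1 → BS n2 → BS m) (k1 k2 ε : ℝ)
    (hε : 0 < ε) (hε1 : ε ≤ 1)
    (h : IsStrongExt n1 n2 m Ext k1 k2 ε) :
    IsStrongExtCPT n1 n2 m Ext k1 (k2 + Real.logb 2 (1/ε)) (2*ε) :=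
  stmt2_general Ext k1 k2 ε hε h
end

section
/- Let n1, n2, m ∈ ℕ and k1, k2 ∈ ℝ. Let {f_{x1} : {0,1}^{n2} → {0,1}^m}_{x1 ∈ {0,1}^{n1}} be a two-universal family of hash functions. Let X1 be a random variable on {0,1}^{n1} with H_min(X1) ≥ k1, and let P_{X2Z2} be a finite joint distribution, independent of X1, with H_min(X2|Z2) ≥ k2. Then Σ_{x1} P_{X1}(x1) · TV( law of (f_{x1}(X2), Z2), U_m × P_{Z2} ) ≤ 2^{−(2 + k1 + k2 − n1 − m)/2}. -/
open Matrix Kronecker BigOperators Finset ComplexOrder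

/-!
For a fixed seed `x1`, Cauchy–Schwarz bounds the distance of `(f_{x1}(X2), Z2)` from `U_m × P_{Z2}`
by half the square root of its χ²-divergence. Summed over all seeds, two-universality bounds
these divergences, one value `z` of `Z2` at a time, by `2^{n1 + m}` times the guessing probability
`Σ_z max_x P_{X2Z2}(x, z) ≤ 2^{-k2}` (the `ℓ²` leftover hash lemma). A second Cauchy–Schwarz
against the weights `P_{X1}` brings in the collision probability `Σ P_{X1}² ≤ 2^{-k1}`.
-/

def pushforward {α β : Type*} [Fintype α] [DecidableEq β] (g : α → β) (p : α → ℝ) (u : β) : ℝ :=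
  ∑ x with g x = u, p x

section Pushforward

variable {α β : Type*} [Fintype α] [Fintype β] [DecidableEq β]

theorem sum_pushforward (g : α → β) (p : α → ℝ) : ∑ u, pushforward g p u = ∑ x, p x :=
  Finset.sum_fiberwise _ g p

theorem sum_pushforward_sq (g : α → β) (p : α → ℝ) :
    ∑ u, pushforward g p u ^ 2 = ∑ x, ∑ y, if g x = g y then p x * p y else 0 := by
  have fiber (u : β) : pushforward g p u ^ 2
      = ∑ x with g x = u, ∑ y with g y = g x, p x * p y := by
    rw [pushforward, sq, Finset.sum_mul_sum]
    exact Finset.sum_congr rfl fun x hx => by rw [(Finset.mem_filter.1 hx).2]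
  simp only [fiber]
  rw [Finset.sum_fiberwise]
  simp only [Finset.sum_filter, eq_comm]

end Pushforward

theorem sum_sq_sub_mean {β : Type*} [Fintype β] (a : β → ℝ) :
    ∑ u, (a u - (Fintype.card β : ℝ)⁻¹ * ∑ v, a v) ^ 2
      = ∑ u, a u ^ 2 - (Fintype.card β : ℝ)⁻¹ * (∑ u, a u) ^ 2 := by
  rcases isEmpty_or_nonempty β with _ | _
  · simp
  simp only [sub_sq, Finset.sum_add_distrib, Finset.sum_sub_distrib, ← Finset.sum_mul,
    ← Finset.mul_sum, Finset.sum_const, Finset.card_univ, nsmul_eq_mul]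
  field_simp
  ring

def IsTwoUniversal {ι α β : Type*} [Fintype ι] [Fintype β] [DecidableEq β]
    (f : ι → α → β) : Prop :=
  ∀ x x', x ≠ x' → (#{i | f i x = f i x'} : ℝ) / Fintype.card ι ≤ (Fintype.card β : ℝ)⁻¹

namespace IsTwoUniversal

variable {ι α β : Type*} [Fintype ι] [Fintype β] [DecidableEq β] {f : ι → α → β}

theorem card_collisions_le [DecidableEq α] (hf : IsTwoUniversal f) (x y : α) :
    (#{i | f i x = f i y} : ℝ)
      ≤ Fintype.card ι / Fintype.card β + if x = y then (Fintype.card ι : ℝ) else 0 := by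
  have hcard : (#{i | f i x = f i y} : ℝ) ≤ Fintype.card ι := by
    exact_mod_cast Finset.card_le_univ _
  split_ifs with hxy
  · exact hcard.trans (le_add_of_nonneg_left (by positivity))
  · rcases isEmpty_or_nonempty ι with hι | hι
    · simp
    · rw [add_zero, div_eq_mul_inv, ← div_le_iff₀' (by positivity)]
      exact hf x y hxy

theorem sum_sum_sq_pushforward_le [Fintype α] (hf : IsTwoUniversal f) {p : α → ℝ}
    (hp : ∀ x, 0 ≤ p x) :
    ∑ i, ∑ u, pushforward (f i) p u ^ 2
      ≤ Fintype.card ι / Fintype.card β * (∑ x, p x) ^ 2 + Fintype.card ι * ∑ x, p x ^ 2 := by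
  classical
  calc ∑ i, ∑ u, pushforward (f i) p u ^ 2
      = ∑ x, ∑ y, (#{i | f i x = f i y} : ℝ) * (p x * p y) := by
        simp only [sum_pushforward_sq]
        rw [Finset.sum_comm]
        refine Finset.sum_congr rfl fun x _ => ?_
        rw [Finset.sum_comm]
        refine Finset.sum_congr rfl fun y _ => ?_
        rw [← Finset.sum_filter, Finset.sum_const, nsmul_eq_mul]
    _ ≤ ∑ x, ∑ y, (Fintype.card ι / Fintype.card β + if x = y then (Fintype.card ι : ℝ) else 0)
          * (p x * p y) := by
        gcongr with x _ y _
        · exact mul_nonneg (hp x) (hp y)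
        · exact hf.card_collisions_le x y
    _ = Fintype.card ι / Fintype.card β * (∑ x, p x) ^ 2 + Fintype.card ι * ∑ x, p x ^ 2 := by
        simp only [add_mul, ite_mul, zero_mul, Finset.sum_add_distrib, Finset.sum_ite_eq,
          Finset.mem_univ, if_true, ← Finset.mul_sum, sq, Finset.sum_mul_sum]

/-- The leftover hash lemma in its `ℓ²` form. -/
theorem sum_sum_sq_pushforward_sub_le [Fintype α] (hf : IsTwoUniversal f) {p : α → ℝ}
    (hp : ∀ x, 0 ≤ p x) :
    ∑ i, ∑ u, (pushforward (f i) p u - (Fintype.card β : ℝ)⁻¹ * ∑ x, p x) ^ 2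
      ≤ Fintype.card ι * ∑ x, p x ^ 2 := by
  have hmean (i : ι) : ∑ u, (pushforward (f i) p u - (Fintype.card β : ℝ)⁻¹ * ∑ x, p x) ^ 2
      = ∑ u, pushforward (f i) p u ^ 2 - (Fintype.card β : ℝ)⁻¹ * (∑ x, p x) ^ 2 := by
    rw [← sum_pushforward (f i) p]
    exact sum_sq_sub_mean _
  have := hf.sum_sum_sq_pushforward_le hp
  simp only [hmean, Finset.sum_sub_distrib, Finset.sum_const, Finset.card_univ, nsmul_eq_mul]
  rw [div_eq_mul_inv] at this
  linarith

end IsTwoUniversal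

/-- The χ²-divergence; by the convention `x / 0 = 0`, points with `R a = 0` contribute nothing. -/
noncomputable def chiSq {α : Type*} [Fintype α] (Q R : α → ℝ) : ℝ := ∑ a, (Q a - R a) ^ 2 / R a

theorem sq_sum_abs_le_sum_mul_sum_sq_div {ι : Type*} (s : Finset ι) (d w : ι → ℝ)
    (hw : ∀ i ∈ s, 0 ≤ w i) (hd : ∀ i ∈ s, w i = 0 → d i = 0) :
    (∑ i ∈ s, |d i|) ^ 2 ≤ (∑ i ∈ s, w i) * ∑ i ∈ s, d i ^ 2 / w i :=
  Finset.sum_sq_le_sum_mul_sum_of_sq_le_mul s hw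
    (fun i hi => div_nonneg (sq_nonneg _) (hw i hi)) fun i hi => by
      rcases (hw i hi).eq_or_lt with h | h
      · simp [hd i hi h.symm]
      · rw [mul_div_cancel₀ _ h.ne', sq_abs]

theorem TV_sq_le_chiSq_div_four {α : Type*} [Fintype α] {Q R : α → ℝ} (hR : IsDist R)
    (hQR : ∀ a, R a = 0 → Q a = 0) : TV Q R ^ 2 ≤ chiSq Q R / 4 := by
  have := sq_sum_abs_le_sum_mul_sum_sq_div univ (fun a => Q a - R a) R
    (fun a _ => hR.1 a) fun a _ ha => by simp [ha, hQR a ha]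
  rw [hR.2, one_mul] at this
  rw [TV, mul_pow, chiSq]
  linarith

theorem sum_sq_le_iSup_mul_sum {α : Type*} [Fintype α] {p : α → ℝ} (hp : ∀ x, 0 ≤ p x) :
    ∑ x, p x ^ 2 ≤ (⨆ x, p x) * ∑ x, p x := by
  rw [Finset.mul_sum]
  gcongr with x
  rw [sq]
  exact mul_le_mul_of_nonneg_right (le_ciSup (Set.finite_range p).bddAbove x) (hp x)

theorem IsTwoUniversal.sum_chiSq_le {ι α β Z : Type*} [Fintype ι] [Fintype α] [Fintype β]
    [DecidableEq β] [Fintype Z] {f : ι → α → β} (hf : IsTwoUniversal f) {P : α → Z → ℝ}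
    (hP : ∀ x z, 0 ≤ P x z) :
    ∑ i, chiSq (fun q : β × Z => pushforward (f i) (P · q.2) q.1)
        (fun q => (Fintype.card β : ℝ)⁻¹ * ∑ x, P x q.2)
      ≤ Fintype.card β * Fintype.card ι * ∑ z, ⨆ x, P x z := by
  rcases isEmpty_or_nonempty β with _ | _
  · simp [chiSq]
  set c := (Fintype.card β : ℝ)
  have hz (z : Z) : ∑ i, ∑ u, (pushforward (f i) (P · z) u - c⁻¹ * ∑ x, P x z) ^ 2
      / (c⁻¹ * ∑ x, P x z) ≤ c * Fintype.card ι * ⨆ x, P x z := by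
    have hsum : ∑ i, ∑ u, (pushforward (f i) (P · z) u - c⁻¹ * ∑ x, P x z) ^ 2
        ≤ Fintype.card ι * ((⨆ x, P x z) * ∑ x, P x z) :=
      (hf.sum_sum_sq_pushforward_sub_le (hP · z)).trans
        (by gcongr; exact sum_sq_le_iSup_mul_sum (hP · z))
    have hc : c ≠ 0 := by positivity
    simp only [← Finset.sum_div]
    refine div_le_of_le_mul₀ (mul_nonneg (by positivity) (Finset.sum_nonneg fun x _ => hP x z))
      (by have := Real.iSup_nonneg (hP · z); positivity) ?_
    calc _ ≤ _ := hsum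
      _ = _ := by field_simp
  calc _ = ∑ z, ∑ i, ∑ u, (pushforward (f i) (P · z) u - c⁻¹ * ∑ x, P x z) ^ 2
        / (c⁻¹ * ∑ x, P x z) := by
        simp only [chiSq, Fintype.sum_prod_type]
        rw [Finset.sum_congr rfl fun i _ => Finset.sum_comm, Finset.sum_comm]
    _ ≤ ∑ z, c * Fintype.card ι * ⨆ x, P x z := Finset.sum_le_sum fun z _ => hz z
    _ = _ := (Finset.mul_sum ..).symm

theorem IsTwoUniversal.sq_sum_mul_TV_le {ι α β Z : Type*} [Fintype ι] [Fintype α] [Fintype β]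
    [DecidableEq β] [Nonempty β] [Fintype Z] {f : ι → α → β} (hf : IsTwoUniversal f)
    (P1 : ι → ℝ) {P2 : α → Z → ℝ} (hP2 : IsDist fun p : α × Z => P2 p.1 p.2) :
    (∑ i, P1 i * TV (fun q : β × Z => pushforward (f i) (P2 · q.2) q.1)
        (fun q => (Fintype.card β : ℝ)⁻¹ * ∑ x, P2 x q.2)) ^ 2
      ≤ Fintype.card β * Fintype.card ι / 4 * (∑ i, P1 i ^ 2) * ∑ z, ⨆ x, P2 x z := by
  have hP2nn (x : α) (z : Z) : 0 ≤ P2 x z := hP2.1 (x, z)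
  have hR : IsDist fun q : β × Z => (Fintype.card β : ℝ)⁻¹ * ∑ x, P2 x q.2 := by
    refine ⟨fun q => mul_nonneg (by positivity) (Finset.sum_nonneg fun x _ => hP2nn x q.2), ?_⟩
    rw [Fintype.sum_prod_type, Finset.sum_comm]
    simp only [← Finset.mul_sum, Finset.sum_const, Finset.card_univ, nsmul_eq_mul]
    rw [← hP2.2, Fintype.sum_prod_type, Finset.sum_comm]
    field_simp
  have hsupport (i : ι) (q : β × Z) (hq : (Fintype.card β : ℝ)⁻¹ * ∑ x, P2 x q.2 = 0) :
      pushforward (f i) (P2 · q.2) q.1 = 0 := by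
    have hzero := (Finset.sum_eq_zero_iff_of_nonneg fun x _ => hP2nn x q.2).1
      ((mul_eq_zero.1 hq).resolve_left (by positivity))
    exact Finset.sum_eq_zero fun x _ => hzero x (Finset.mem_univ x)
  calc _ ≤ (∑ i, P1 i ^ 2) * ∑ i, TV (fun q : β × Z => pushforward (f i) (P2 · q.2) q.1)
          (fun q => (Fintype.card β : ℝ)⁻¹ * ∑ x, P2 x q.2) ^ 2 :=
        Finset.sum_mul_sq_le_sq_mul_sq _ _ _
    _ ≤ (∑ i, P1 i ^ 2) * ∑ i, chiSq (fun q : β × Z => pushforward (f i) (P2 · q.2) q.1)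
          (fun q => (Fintype.card β : ℝ)⁻¹ * ∑ x, P2 x q.2) / 4 := by
        gcongr with i
        exact TV_sq_le_chiSq_div_four hR (hsupport i)
    _ ≤ (∑ i, P1 i ^ 2) * ((Fintype.card β * Fintype.card ι * ∑ z, ⨆ x, P2 x z) / 4) := by
        rw [← Finset.sum_div]
        gcongr
        exact hf.sum_chiSq_le hP2nn
    _ = _ := by ring

theorem le_rpow_neg_of_le_neg_logb {s k : ℝ} (hs : 0 ≤ s) (hk : k ≤ -Real.logb 2 s) :
    s ≤ 2 ^ (-k) := by
  rcases hs.eq_or_lt with rfl | hs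
  · positivity
  · exact (Real.logb_le_iff_le_rpow one_lt_two hs).1 (by linarith)

theorem sum_sq_le_rpow_of_le_Hmin {X : Type*} [Fintype X] [Nonempty X] {P : X → ℝ}
    (hP : IsDist P) {k : ℝ} (hk : k ≤ Hmin P) : ∑ x, P x ^ 2 ≤ 2 ^ (-k) :=
  calc _ ≤ (⨆ x, P x) * ∑ x, P x := sum_sq_le_iSup_mul_sum hP.1
    _ = ⨆ x, P x := by rw [hP.2, mul_one]
    _ ≤ _ := le_rpow_neg_of_le_neg_logb (Real.iSup_nonneg hP.1) hk

theorem sum_iSup_le_rpow_of_le_HminCond {X Z : Type*} [Fintype X] [Nonempty X] [Fintype Z]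
    {P : X → Z → ℝ} (hP : ∀ x z, 0 ≤ P x z) {k : ℝ} (hk : k ≤ HminCond P) :
    ∑ z, ⨆ x, P x z ≤ 2 ^ (-k) :=
  le_rpow_neg_of_le_neg_logb (Finset.sum_nonneg fun z _ => Real.iSup_nonneg (hP · z)) hk

theorem two_rpow_half_sq (n1 m : ℕ) (k1 k2 : ℝ) :
    ((2:ℝ) ^ (-(2 + k1 + k2 - (n1:ℝ) - (m:ℝ)) / 2)) ^ 2
      = 2 ^ m * 2 ^ n1 / 4 * 2 ^ (-k1) * 2 ^ (-k2) := by
  rw [← Real.rpow_natCast _ 2, ← Real.rpow_mul zero_le_two, ← Real.rpow_natCast _ m,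
    ← Real.rpow_natCast _ n1, show (4:ℝ) = 2 ^ (2:ℝ) by norm_num, ← Real.rpow_add two_pos,
    ← Real.rpow_sub two_pos, ← Real.rpow_add two_pos, ← Real.rpow_add two_pos]
  congr 1
  push_cast
  ring

theorem stmt19 {n1 n2 m : ℕ} (k1 k2 : ℝ)
    (f : BS n1 → BS n2 → BS m)
    (huniv : ∀ x2 x2' : BS n2, x2 ≠ x2' →
      ((Finset.univ.filter (fun x1 : BS n1 => f x1 x2 = f x1 x2')).card : ℝ) / 2^n1
        ≤ ((2:ℝ)^m)⁻¹)
    (P1 : BS n1 → ℝ) (hP1 : IsDist P1) (hk1 : k1 ≤ Hmin P1)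
    {Z2 : Type} [Fintype Z2] (P2 : BS n2 → Z2 → ℝ)
    (hP2 : IsDist fun p : BS n2 × Z2 => P2 p.1 p.2) (hk2 : k2 ≤ HminCond P2) :
    ∑ x1, P1 x1 *
      TV (fun q : BS m × Z2 =>
            ∑ x2 ∈ Finset.univ.filter (fun x2 : BS n2 => f x1 x2 = q.1), P2 x2 q.2)
         (fun q : BS m × Z2 => ((2:ℝ)^m)⁻¹ * ∑ x2, P2 x2 q.2)
      ≤ (2:ℝ) ^ (-(2 + k1 + k2 - (n1:ℝ) - (m:ℝ))/2) := by
  have hcard (n : ℕ) : (Fintype.card (BS n) : ℝ) = 2 ^ n := by simp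
  have hf : IsTwoUniversal f := fun x2 x2' hne => by simpa only [hcard] using huniv x2 x2' hne
  have hbound := hf.sq_sum_mul_TV_le P1 hP2
  rw [hcard, hcard] at hbound
  have hP2nn (x : BS n2) (z : Z2) : 0 ≤ P2 x z := hP2.1 (x, z)
  have hcollision := sum_sq_le_rpow_of_le_Hmin hP1 hk1
  have hguessing := sum_iSup_le_rpow_of_le_HminCond hP2nn hk2
  refine le_of_pow_le_pow_left₀ two_ne_zero (by positivity) ?_
  calc _ ≤ _ := hbound
    _ ≤ 2 ^ m * 2 ^ n1 / 4 * 2 ^ (-k1) * 2 ^ (-k2) := by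
        gcongr
        exact Finset.sum_nonneg fun z _ => Real.iSup_nonneg (hP2nn · z)
    _ = _ := (two_rpow_half_sq n1 m k1 k2).symm
end
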